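/- arXiv:math/9911101 — 5 statements merged into one kernel-verified Lean document; each statement's English description precedes it below -/
import Mathlib

section
/- For every integer n ≥ 2, the Jacquard language J_n is a finite set and its cardinality satisfies the recursion card(J_n) = 3·card(J_{n-1}) − card(J_{n-2}) (equivalently, card(J_n) + card(J_{n-2}) = 3·card(J_{n-1})). -/
/-! A word of `J (n+2)` is recovered from its last letter: it ends in `a₀` exactly when it comes
from `J (n+1)·a₀`, and in `a_j` (`j ≥ 1`) exactly when it comes from `J (n+2-j)·a₁⋯a_j`. Hence
`|J (n+2)| = |J (n+1)| + ∑_{i=1}^{n+1} |J i|`, and subtracting this identity from its instance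
at `n+1` gives `|J (n+3)| = 3 |J (n+2)| - |J (n+1)|`. -/

/-- The Jacquard languages: `Jacquard 0 = {ε}`, `Jacquard 1 = {a₀}`, and, for `n ≥ 2`,
`Jacquard n = Jacquard (n-1)·a₀ ∪ ⋃_{1 ≤ j ≤ n-1} Jacquard (n-j)·(a₁a₂⋯a_j)`,
where a letter `a_j` is modeled by the natural number `j` and a word by a list. -/
def Jacquard : ℕ → Set (List ℕ)
  | 0 => {[]}
  | 1 => {[0]}
  | n + 2 =>
      ((· ++ [0]) '' Jacquard (n + 1)) ∪
        ⋃ (j : ℕ) (_ : 1 ≤ j ∧ j ≤ n + 1),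
          (· ++ (List.range j).map (· + 1)) '' Jacquard (n + 2 - j)
  termination_by n => n
  decreasing_by all_goals omega

lemma List.getLast?_map_succ_range {j : ℕ} (hj : j ≠ 0) :
    ((List.range j).map (· + 1)).getLast? = some j := by
  obtain ⟨k, rfl⟩ := Nat.exists_eq_succ_of_ne_zero hj
  simp [List.range_succ]

lemma Set.disjoint_image_append_of_getLast? {α : Type*} {S T : Set (List α)} {u v : List α}
    {a b : α} (hu : u.getLast? = some a) (hv : v.getLast? = some b) (hab : a ≠ b) :
    Disjoint ((· ++ u) '' S) ((· ++ v) '' T) := by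
  rw [Set.disjoint_left]
  rintro _ ⟨x, -, rfl⟩ ⟨y, -, hyx⟩
  have := congrArg List.getLast? hyx
  simp only [List.getLast?_append, hu, hv, Option.some_or, Option.some_inj] at this
  exact hab this.symm

namespace Jacquard

lemma eq_add_two (n : ℕ) :
    Jacquard (n + 2) = ((· ++ [0]) '' Jacquard (n + 1)) ∪
      ⋃ j ∈ Set.Icc 1 (n + 1), (· ++ (List.range j).map (· + 1)) '' Jacquard (n + 2 - j) :=
  Jacquard.eq_3 n

lemma finite (n : ℕ) : (Jacquard n).Finite := by
  induction n using Nat.strong_induction_on with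
  | _ n ih =>
    match n with
    | 0 => simp [Jacquard]
    | 1 => simp [Jacquard]
    | n + 2 =>
      rw [eq_add_two]
      refine ((ih _ (by omega)).image _).union ((Set.finite_Icc _ _).biUnion fun j hj => ?_)
      exact (ih _ (by grind)).image _

lemma ncard_add_two (n : ℕ) :
    (Jacquard (n + 2)).ncard =
      (Jacquard (n + 1)).ncard + ∑ i ∈ Finset.Icc 1 (n + 1), (Jacquard i).ncard := by
  have hlast : ∀ j ∈ Set.Icc 1 (n + 1), ((List.range j).map (· + 1)).getLast? = some j :=
    fun j hj => List.getLast?_map_succ_range (by grind)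
  have hdisj : Disjoint ((· ++ [0]) '' Jacquard (n + 1))
      (⋃ j ∈ Set.Icc 1 (n + 1), (· ++ (List.range j).map (· + 1)) '' Jacquard (n + 2 - j)) :=
    Set.disjoint_iUnion₂_right.mpr fun j hj =>
      Set.disjoint_image_append_of_getLast? rfl (hlast j hj) (by grind)
  have hpairwise : (Set.Icc 1 (n + 1)).PairwiseDisjoint
      fun j => (· ++ (List.range j).map (· + 1)) '' Jacquard (n + 2 - j) :=
    fun i hi j hj hij => Set.disjoint_image_append_of_getLast? (hlast i hi) (hlast j hj) hij
  rw [eq_add_two, Set.ncard_union_eq hdisj ((finite _).image _)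
      ((Set.finite_Icc _ _).biUnion fun j _ => (finite _).image _),
    Set.ncard_image_of_injective _ (List.append_left_injective _),
    (Set.finite_Icc 1 (n + 1)).ncard_biUnion (fun j _ => (finite _).image _) hpairwise,
    ← Finset.coe_Icc, finsum_mem_coe_finset]
  congr 1
  rw [Finset.sum_congr rfl fun j _ =>
    Set.ncard_image_of_injective (Jacquard (n + 2 - j)) (List.append_left_injective _)]
  exact Finset.sum_nbij' (n + 2 - ·) (n + 2 - ·) (by grind) (by grind) (by grind) (by grind)
    (by grind)

lemma ncard_add_two_add_ncard (n : ℕ) :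
    (Jacquard (n + 2)).ncard + (Jacquard n).ncard = 3 * (Jacquard (n + 1)).ncard := by
  cases n with
  | zero =>
    rw [ncard_add_two]
    simp [Jacquard.eq_1, Jacquard.eq_2]
  | succ n =>
    show (Jacquard (n + 3)).ncard + (Jacquard (n + 1)).ncard = 3 * (Jacquard (n + 2)).ncard
    have hprev := ncard_add_two n
    have hnext : (Jacquard (n + 3)).ncard = (Jacquard (n + 2)).ncard +
        ((∑ i ∈ Finset.Icc 1 (n + 1), (Jacquard i).ncard) + (Jacquard (n + 2)).ncard) := by
      rw [← Finset.sum_Icc_succ_top (by omega)]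
      exact ncard_add_two (n + 1)
    omega

end Jacquard

/-- For every `n ≥ 2`, the Jacquard language `J_n` is a finite set and
`card (J_n) + card (J_{n-2}) = 3 * card (J_{n-1})`. -/
theorem jacquard_card_recursion (n : ℕ) (hn : 2 ≤ n) :
    (Jacquard n).Finite ∧ (Jacquard (n - 1)).Finite ∧ (Jacquard (n - 2)).Finite ∧
      (Jacquard n).ncard + (Jacquard (n - 2)).ncard = 3 * (Jacquard (n - 1)).ncard := by
  obtain ⟨m, rfl⟩ := Nat.exists_eq_add_of_le' hn
  exact ⟨Jacquard.finite _, Jacquard.finite _, Jacquard.finite _,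
    Jacquard.ncard_add_two_add_ncard m⟩
end

section
/- For every integer n ≥ 1, a word w = w_1 w_2 ⋯ w_n of length n belongs to the Jacquard language J_n if and only if w_1 = a_0 and, for every 1 ≤ i ≤ n−1, either w_{i+1} ∈ {a_0, a_1}, or there exists k ≥ 1 such that w_i = a_k and w_{i+1} = a_{k+1}. (This is the automaton characterization of Jacquard words underlying the paper's Corollary that singularity types of Goursat structures on n-manifolds are exactly the words of J_{n-3}.) -/
lemma jacquard_length : ∀ n, ∀ w ∈ Jacquard n, w.length = n := by
  intro n
  induction n using Nat.strong_induction_on with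
  | _ n IH =>
    match n with
    | 0 => intro w hw; simp only [Jacquard, Set.mem_singleton_iff] at hw; simp [hw]
    | 1 => intro w hw; simp only [Jacquard, Set.mem_singleton_iff] at hw; simp [hw]
    | n + 2 =>
      intro w hw
      rw [Jacquard] at hw
      simp only [Set.mem_union, Set.mem_iUnion, Set.mem_image] at hw
      rcases hw with ⟨v, hv, rfl⟩ | ⟨j, ⟨hj1, hj2⟩, v, hv, rfl⟩
      · simp [IH (n+1) (by omega) v hv]
      · have := IH (n+2-j) (by omega) v hv
        simp [this]; omega

lemma jacquard_main : ∀ n, 1 ≤ n → ∀ w : List ℕ, w.length = n →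
    (w ∈ Jacquard n ↔
      (w.getD 0 0 = 0 ∧
        ∀ i, 1 ≤ i → i ≤ n - 1 →
          (w.getD i 0 = 0 ∨ w.getD i 0 = 1 ∨
            ∃ k, 1 ≤ k ∧ w.getD (i - 1) 0 = k ∧ w.getD i 0 = k + 1))) := by
  intro n
  induction n using Nat.strong_induction_on with
  | _ n IH =>
    match n with
    | 0 => intro h; omega
    | 1 =>
      intro _ w hw
      match w, hw with
      | [x], _ =>
        constructor
        · intro h
          simp only [Jacquard, Set.mem_singleton_iff] at h
          injection h with h1 _
          exact ⟨by simp [h1], by intro i h1 h2; omega⟩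
        · rintro ⟨h0, -⟩
          simp only [List.getD] at h0
          simp only [Jacquard, Set.mem_singleton_iff]
          simp_all
    | n + 2 =>
      intro _ w hw
      constructor
      · -- forward
        intro h
        rw [Jacquard] at h
        simp only [Set.mem_union, Set.mem_iUnion, Set.mem_image] at h
        rcases h with ⟨v, hv, rfl⟩ | ⟨j, ⟨hj1, hj2⟩, v, hv, rfl⟩
        · have hvl : v.length = n + 1 := jacquard_length _ v hv
          obtain ⟨h0, hstep⟩ := (IH (n+1) (by omega) (by omega) v hvl).mp hv
          refine ⟨?_, ?_⟩
          · rw [List.getD_append _ _ _ 0 (by omega)]; exact h0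
          · intro i hi1 hi2
            by_cases hle : i ≤ n
            · rw [List.getD_append _ _ _ i (by omega),
                List.getD_append _ _ _ (i-1) (by omega)]
              exact hstep i hi1 (by omega)
            · left
              rw [List.getD_append_right _ _ _ i (by omega)]
              have : i - v.length = 0 := by omega
              rw [this]; rfl
        · have hvl : v.length = n + 2 - j := jacquard_length _ v hv
          obtain ⟨h0, hstep⟩ := (IH (n+2-j) (by omega) (by omega) v hvl).mp hv
          have hs : ∀ t, t < j → ((List.range j).map (· + 1)).getD t 0 = t + 1 := by
            intro t ht
            rw [List.getD_eq_getElem _ _ (by simpa using ht)]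
            simp
          refine ⟨?_, ?_⟩
          · rw [List.getD_append _ _ _ 0 (by omega)]; exact h0
          · intro i hi1 hi2
            rcases lt_trichotomy i v.length with hlt | heq | hgt
            · rw [List.getD_append _ _ _ i hlt,
                List.getD_append _ _ _ (i-1) (by omega)]
              exact hstep i hi1 (by omega)
            · right; left
              rw [List.getD_append_right _ _ _ i (by omega)]
              have h1 : i - v.length = 0 := by omega
              rw [h1, hs 0 (by omega)]
            · right; right
              refine ⟨i - v.length, by omega, ?_, ?_⟩
              · rw [List.getD_append_right _ _ _ (i-1) (by omega)]
                rw [hs (i - 1 - v.length) (by omega)]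
                omega
              · rw [List.getD_append_right _ _ _ i (by omega)]
                rw [hs (i - v.length) (by omega)]
      · -- backward
        rintro ⟨h0, hstep⟩
        have hwne : w ≠ [] := by
          intro h; rw [h] at hw; simp at hw
        rcases Nat.eq_zero_or_pos (w.getD (n+1) 0) with hm0 | hmpos
        · -- last letter is 0
          rw [Jacquard]
          simp only [Set.mem_union, Set.mem_iUnion, Set.mem_image]
          left
          have hdl : w.dropLast.length = n + 1 := by simp [hw]
          have hd : ∀ i < n + 1, w.dropLast.getD i 0 = w.getD i 0 := by
            intro i hi
            rw [List.getD_eq_getElem _ _ (by omega), List.getElem_dropLast]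
            exact (List.getD_eq_getElem w 0 (by omega)).symm
          refine ⟨w.dropLast, ?_, ?_⟩
          · apply (IH (n+1) (by omega) (by omega) _ hdl).mpr
            refine ⟨by rw [hd 0 (by omega)]; exact h0, ?_⟩
            intro i hi1 hi2
            rw [hd i (by omega), hd (i-1) (by omega)]
            exact hstep i hi1 (by omega)
          · have hlast : w.getLast hwne = 0 := by
              rw [List.getLast_eq_getElem, ← List.getD_eq_getElem w 0 (by omega)]
              have : w.length - 1 = n + 1 := by omega
              rw [this]; exact hm0
            show w.dropLast ++ [0] = w
            rw [← hlast]
            exact List.dropLast_append_getLast hwne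
        · -- last letter is m ≥ 1
          set m := w.getD (n+1) 0 with hmdef
          have key : ∀ t, t ≤ m - 1 → w.getD (n+1-t) 0 = m - t ∧ t ≤ n := by
            intro t
            induction t with
            | zero =>
              intro _
              refine ⟨?_, by omega⟩
              rw [Nat.sub_zero, Nat.sub_zero]
            | succ t iht =>
              intro ht
              obtain ⟨hval, htn⟩ := iht (by omega)
              have h2 : 2 ≤ m - t := by omega
              rcases hstep (n+1-t) (by omega) (by omega) with h | h | ⟨k, hk1, hk2, hk3⟩
              · omega
              · omega
              · have hidx : n + 1 - t - 1 = n + 1 - (t+1) := by omega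
                rw [hidx] at hk2
                by_cases hc : t + 1 ≤ n
                · exact ⟨by omega, hc⟩
                · exfalso
                  have hz : n + 1 - (t+1) = 0 := by omega
                  rw [hz] at hk2
                  omega
          have hm_le : m ≤ n + 1 := by
            have := (key (m-1) (le_refl _)).2; omega
          rw [Jacquard]
          simp only [Set.mem_union, Set.mem_iUnion, Set.mem_image]
          right
          have htl : (w.take (n+2-m)).length = n + 2 - m := by
            rw [List.length_take, hw]; omega
          have htake : ∀ i < n + 2 - m, (w.take (n+2-m)).getD i 0 = w.getD i 0 := by
            intro i hi
            rw [List.getD_eq_getElem _ _ (by omega), List.getElem_take]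
            exact (List.getD_eq_getElem w 0 (by omega)).symm
          refine ⟨m, ⟨hmpos, hm_le⟩, w.take (n+2-m), ?_, ?_⟩
          · apply (IH (n+2-m) (by omega) (by omega) _ htl).mpr
            refine ⟨by rw [htake 0 (by omega)]; exact h0, ?_⟩
            intro i hi1 hi2
            rw [htake i (by omega), htake (i-1) (by omega)]
            exact hstep i hi1 (by omega)
          · show w.take (n+2-m) ++ (List.range m).map (· + 1) = w
            apply List.ext_getElem
            · simp [hw]; omega
            · intro idx h1 h2
              by_cases hlt : idx < (w.take (n+2-m)).length
              · rw [List.getElem_append_left hlt, List.getElem_take]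
              · push_neg at hlt
                rw [List.getElem_append_right hlt]
                simp only [List.getElem_map, List.getElem_range]
                have hk := (key (n+1-idx) (by omega)).1
                have hi : n+1-(n+1-idx) = idx := by omega
                rw [hi] at hk
                rw [← List.getD_eq_getElem w 0 h2]
                omega

/-- Automaton characterization of Jacquard words: for `n ≥ 1`, a word `w = w₁⋯w_n` of
length `n` belongs to `J_n` iff `w₁ = a₀` and, for every `1 ≤ i ≤ n-1`, either
`w_{i+1} ∈ {a₀, a₁}` or there is `k ≥ 1` with `w_i = a_k` and `w_{i+1} = a_{k+1}`.
(Here `w_i` is the `(i-1)`-th entry of the list `w`.) -/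
theorem jacquard_automaton (n : ℕ) (hn : 1 ≤ n) (w : List ℕ) (hw : w.length = n) :
    w ∈ Jacquard n ↔
      (w.getD 0 0 = 0 ∧
        ∀ i, 1 ≤ i → i ≤ n - 1 →
          (w.getD i 0 = 0 ∨ w.getD i 0 = 1 ∨
            ∃ k, 1 ≤ k ∧ w.getD (i - 1) 0 = k ∧ w.getD i 0 = k + 1)) :=
  jacquard_main n hn w hw
end

section
/- For every m ≥ 1 and every sequence σ = (σ_2, ..., σ_m) with each σ_t ∈ {S, R_0, R_*}, the word δ(σ) produced by the Kumpera–Ruiz labeling recursion belongs to the Jacquard language J_m; conversely, every word of J_m equals δ(σ) for some such sequence σ. (This is the combinatorial content of the paper's Corollary 4.8, via the recursion (eq. 4.3) assigning a word to each Kumpera–Ruiz normal form.) -/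
/-- The three kinds of prolongations in a Kumpera-Ruiz normal form: a singular
prolongation `S`, a regular prolongation `R₀` with constant `0`, and a regular
prolongation `R⋆` with nonzero constant. -/
inductive KRStep : Type
  | S : KRStep
  | R0 : KRStep
  | Rstar : KRStep

/-- One step of the Kumpera-Ruiz labeling recursion: if `u` is the word associated to
`(σ₂, …, σ_{t-1})`, the word associated to `(σ₂, …, σ_t)` is `u a₁` if `σ_t = S`;
`u a_{i+1}` if `σ_t = R₀` and the last letter of `u` is `a_i` with `i ≥ 1`;
and `u a₀` otherwise. -/
def KRextend (u : List ℕ) : KRStep → List ℕ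
  | .S => u ++ [1]
  | .R0 =>
      match u.getLast? with
      | some (i + 1) => u ++ [i + 2]
      | _ => u ++ [0]
  | .Rstar => u ++ [0]

/-- The word `δ(σ)` associated by the Kumpera-Ruiz labeling recursion to a sequence
`σ = (σ₂, …, σ_m)` of prolongation steps; the word associated to the empty
sequence is `a₀`. -/
def KRword (σ : List KRStep) : List ℕ := σ.foldl KRextend [0]

lemma KRword_concat (σ : List KRStep) (s : KRStep) :
    KRword (σ ++ [s]) = KRextend (KRword σ) s := by
  simp [KRword, List.foldl_append]

lemma range_map_getLast (j : ℕ) (v : List ℕ) :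
    (v ++ (List.range (j + 1)).map (· + 1)).getLast? = some (j + 1) := by
  rw [List.range_succ, List.map_append, ← List.append_assoc]
  simp

lemma mem_jacquard_branch {n j : ℕ} (h1 : 1 ≤ j) (h2 : j ≤ n + 1)
    {v : List ℕ} (hv : v ∈ Jacquard (n + 2 - j)) :
    v ++ (List.range j).map (· + 1) ∈ Jacquard (n + 2) := by
  rw [Jacquard]
  exact Or.inr (Set.mem_iUnion₂.mpr ⟨j, ⟨h1, h2⟩, ⟨v, hv, rfl⟩⟩)

lemma jacquard_inv : ∀ {n : ℕ} {u : List ℕ}, u ∈ Jacquard n → ∀ {j : ℕ},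
    u.getLast? = some (j + 1) →
    j + 2 ≤ n ∧ ∃ v ∈ Jacquard (n - (j + 1)),
      u = v ++ (List.range (j + 1)).map (· + 1)
  | 0, u, hu, j, hl => by
      simp only [Jacquard, Set.mem_singleton_iff] at hu; subst hu; simp at hl
  | 1, u, hu, j, hl => by
      simp only [Jacquard, Set.mem_singleton_iff] at hu; subst hu; simp at hl
  | n + 2, u, hu, j, hl => by
      rw [Jacquard] at hu
      rcases hu with ⟨w, hw, rfl⟩ | hu
      · rw [List.getLast?_concat] at hl
        simp at hl
      · simp only [Set.mem_iUnion, Set.mem_image] at hu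
        obtain ⟨k, ⟨hk1, hk2⟩, v, hv, rfl⟩ := hu
        obtain ⟨k', rfl⟩ : ∃ k', k = k' + 1 := ⟨k - 1, by omega⟩
        rw [range_map_getLast] at hl
        have hkj : k' = j := by simpa using hl
        subst hkj
        exact ⟨by omega, v, hv, rfl⟩

lemma KRword_mem (σ : List KRStep) : KRword σ ∈ Jacquard (σ.length + 1) := by
  induction σ using List.reverseRecOn with
  | nil => simp [KRword, Jacquard]
  | append_singleton σ s ih =>
    rw [KRword_concat, List.length_append, List.length_singleton]
    cases s with
    | Rstar =>
      rw [show σ.length + 1 + 1 = σ.length + 2 from rfl, Jacquard]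
      exact Or.inl ⟨KRword σ, ih, rfl⟩
    | S =>
      have h : KRextend (KRword σ) KRStep.S
          = KRword σ ++ (List.range 1).map (· + 1) := rfl
      rw [h]
      exact mem_jacquard_branch le_rfl (by omega) (by simpa using ih)
    | R0 =>
      rcases h : (KRword σ).getLast? with _ | i
      · have h2 : KRextend (KRword σ) KRStep.R0 = KRword σ ++ [0] := by
          simp [KRextend, h]
        rw [h2, show σ.length + 1 + 1 = σ.length + 2 from rfl, Jacquard]
        exact Or.inl ⟨KRword σ, ih, rfl⟩
      · rcases i with _ | i
        · have h2 : KRextend (KRword σ) KRStep.R0 = KRword σ ++ [0] := by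
            simp [KRextend, h]
          rw [h2, show σ.length + 1 + 1 = σ.length + 2 from rfl, Jacquard]
          exact Or.inl ⟨KRword σ, ih, rfl⟩
        · have h2 : KRextend (KRword σ) KRStep.R0 = KRword σ ++ [i + 2] := by
            simp [KRextend, h]
          obtain ⟨hle, v, hv, hu⟩ := jacquard_inv ih h
          have heq : KRword σ ++ [i + 2]
              = v ++ (List.range (i + 2)).map (· + 1) := by
            simp [hu, List.range_succ]
          rw [h2, heq]
          have hv' : v ∈ Jacquard (σ.length + 2 - (i + 2)) := by
            have : σ.length + 1 - (i + 1) = σ.length + 2 - (i + 2) := by omega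
            rwa [this] at hv
          exact mem_jacquard_branch (by omega) (by omega) hv'

lemma R0_chain (u : List ℕ) : ∀ (k i : ℕ),
    List.foldl KRextend (u ++ (List.range (i + 1)).map (· + 1))
      (List.replicate k KRStep.R0)
      = u ++ (List.range (i + 1 + k)).map (· + 1) := by
  intro k
  induction k with
  | zero => simp
  | succ k ih =>
    intro i
    rw [List.replicate_succ, List.foldl_cons]
    have h2 : KRextend (u ++ (List.range (i + 1)).map (· + 1)) KRStep.R0
        = u ++ (List.range (i + 2)).map (· + 1) := by
      have hl := range_map_getLast i u
      simp only [KRextend, hl]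
      simp [List.range_succ]
    rw [h2, ih (i + 1), show i + 1 + 1 + k = i + 1 + (k + 1) from by omega]

lemma jacquard_surj : ∀ n, ∀ w ∈ Jacquard (n + 1),
    ∃ σ : List KRStep, σ.length = n ∧ KRword σ = w := by
  intro n
  induction n using Nat.strong_induction_on with
  | _ n ih =>
    match n with
    | 0 =>
      intro w hw
      rw [show (0 : ℕ) + 1 = 1 from rfl, Jacquard, Set.mem_singleton_iff] at hw
      exact ⟨[], rfl, hw.symm⟩
    | n + 1 =>
      intro w hw
      rw [Jacquard] at hw
      rcases hw with ⟨u, hu, rfl⟩ | hw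
      · obtain ⟨σ, hσl, rfl⟩ := ih n (by omega) u hu
        exact ⟨σ ++ [KRStep.Rstar], by simp [hσl], by rw [KRword_concat]; rfl⟩
      · simp only [Set.mem_iUnion, Set.mem_image] at hw
        obtain ⟨j, ⟨hj1, hj2⟩, u, hu, rfl⟩ := hw
        obtain ⟨k, rfl⟩ : ∃ k, j = k + 1 := ⟨j - 1, by omega⟩
        have h1 : n + 2 - (k + 1) = (n - k) + 1 := by omega
        rw [h1] at hu
        obtain ⟨σ, hσl, hσw⟩ := ih (n - k) (by omega) u hu
        refine ⟨σ ++ KRStep.S :: List.replicate k KRStep.R0, ?_, ?_⟩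
        · simp [hσl]; omega
        · rw [KRword, List.foldl_append, ← KRword, hσw, List.foldl_cons]
          have hS : KRextend u KRStep.S = u ++ (List.range 1).map (· + 1) := rfl
          rw [hS]
          have h3 := R0_chain u k 0
          rw [Nat.zero_add, Nat.add_comm 1 k] at h3
          exact h3

/-- For every `m ≥ 1`: the Kumpera-Ruiz labeling of any sequence `(σ₂,…,σ_m)` of
prolongation steps belongs to the Jacquard language `J_m`, and conversely every word
of `J_m` is the label of some such sequence. -/
theorem kumperaRuiz_label_jacquard (m : ℕ) (hm : 1 ≤ m) :
    (∀ σ : List KRStep, σ.length = m - 1 → KRword σ ∈ Jacquard m) ∧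
      (∀ w ∈ Jacquard m, ∃ σ : List KRStep, σ.length = m - 1 ∧ KRword σ = w) := by
  obtain ⟨n, rfl⟩ : ∃ n, m = n + 1 := ⟨m - 1, by omega⟩
  constructor
  · intro σ hσ
    have := KRword_mem σ
    rwa [show σ.length = n by omega] at this
  · intro w hw
    obtain ⟨σ, h1, h2⟩ := jacquard_surj n w hw
    exact ⟨σ, by omega, h2⟩
end

section
/- Let n ≥ 1 and let w and w̃ be two words of the Jacquard language J_n with w ≠ w̃. Then, after possibly exchanging w and w̃, there exist words z, u, ũ and an integer i ≥ 1 such that either (a) w = u a_1 a_2 ⋯ a_{i−k} a_0^k z and w̃ = ũ c_1 c_2 ⋯ c_i z for some integer 0 ≤ k ≤ i−1 and some letters c_1, ..., c_i all different from a_1; or (b) w = u a_1 a_2 ⋯ a_{i−k} a_0^k z and w̃ = ũ a_1 a_2 ⋯ a_{i−l} a_0^l z for some integers 0 ≤ k, l ≤ i−1 with k ≠ l. (Structural decomposition of distinct Jacquard words, used in the proofs of Theorems 5.4 and 6.6 of the paper.) -/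
/-- The word `a₁ a₂ ⋯ a_{i-k} a₀^k`. -/
def krBlock (i k : ℕ) : List ℕ :=
  (List.range (i - k)).map (· + 1) ++ List.replicate k 0

/-- `JacquardSplit v v'` says: there exist words `z`, `u`, `ũ` and an integer `i ≥ 1`
such that either (a) `v = u a₁a₂⋯a_{i-k} a₀^k z` and `v' = ũ c₁c₂⋯c_i z` for some
`0 ≤ k ≤ i-1` and letters `c₁, …, c_i` all different from `a₁`; or
(b) `v = u a₁a₂⋯a_{i-k} a₀^k z` and `v' = ũ a₁a₂⋯a_{i-l} a₀^l z` for some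
`0 ≤ k, l ≤ i-1` with `k ≠ l`. -/
def JacquardSplit (v v' : List ℕ) : Prop :=
  ∃ (z u u' : List ℕ) (i : ℕ), 1 ≤ i ∧
    ((∃ k, k ≤ i - 1 ∧ ∃ c : List ℕ, c.length = i ∧ (∀ x ∈ c, x ≠ 1) ∧
        v = u ++ krBlock i k ++ z ∧ v' = u' ++ c ++ z) ∨
      (∃ k l, k ≤ i - 1 ∧ l ≤ i - 1 ∧ k ≠ l ∧
        v = u ++ krBlock i k ++ z ∧ v' = u' ++ krBlock i l ++ z))

def rng (j : ℕ) : List ℕ := (List.range j).map (· + 1)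

lemma rng_add (a b : ℕ) :
    rng (a + b) = rng a ++ (List.range b).map (fun x => a + x + 1) := by
  simp [rng, List.range_add, List.map_map, Function.comp]

lemma krBlock_eq (i k : ℕ) : krBlock i k = rng (i - k) ++ List.replicate k 0 := rfl

lemma krBlock_zero (i : ℕ) : krBlock i 0 = rng i := by simp [krBlock, rng]

lemma jac_one {w : List ℕ} (hw : w ∈ Jacquard 1) : w = [0] := by
  simp only [Jacquard, Set.mem_singleton_iff] at hw
  exact hw

lemma rep_append (N : ℕ) : List.replicate N 0 ++ [0] = List.replicate (N+1) (0:ℕ) := by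
  simp [List.replicate_succ']

lemma mem_jacquard_iff {n : ℕ} {w : List ℕ} :
    w ∈ Jacquard (n+2) ↔ (∃ v ∈ Jacquard (n+1), w = v ++ [0]) ∨
      ∃ j, 1 ≤ j ∧ j ≤ n+1 ∧ ∃ v ∈ Jacquard (n+2-j), w = v ++ rng j := by
  rw [Jacquard]
  simp [Set.mem_union, Set.mem_iUnion, Set.mem_image, rng, eq_comm, and_assoc]

lemma decomp : ∀ n, 1 ≤ n → ∀ w ∈ Jacquard n,
    w = List.replicate n 0 ∨ ∃ u m k, 1 ≤ m ∧ w = u ++ rng m ++ List.replicate k 0 := by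
  intro n
  induction n using Nat.strong_induction_on with
  | _ n ih =>
    rcases n with _ | _ | n
    · omega
    · intro _ w hw
      left; simp [jac_one hw]
    · intro _ w hw
      rw [mem_jacquard_iff] at hw
      rcases hw with ⟨v, hv, rfl⟩ | ⟨j, hj1, hjn, v, hv, rfl⟩
      · rcases ih (n+1) (by omega) (by omega) v hv with h | ⟨u, m, k, hm, h⟩
        · left
          rw [h, rep_append]
        · right
          exact ⟨u, m, k+1, hm, by rw [h]; simp [List.replicate_succ']⟩
      · right; exact ⟨v, j, 0, hj1, by simp⟩

lemma JacquardSplit.append_right {v v' : List ℕ} (h : JacquardSplit v v') (s : List ℕ) :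
    JacquardSplit (v ++ s) (v' ++ s) := by
  obtain ⟨z, u, u', i, hi, h⟩ := h
  refine ⟨z ++ s, u, u', i, hi, ?_⟩
  rcases h with ⟨k, hk, c, hc, hc1, hv, hv'⟩ | ⟨k, l, hk, hl, hkl, hv, hv'⟩
  · exact Or.inl ⟨k, hk, c, hc, hc1, by rw [hv]; simp, by rw [hv']; simp⟩
  · exact Or.inr ⟨k, l, hk, hl, hkl, by rw [hv]; simp, by rw [hv']; simp⟩

lemma split_of_zero {N j : ℕ} {v' : List ℕ} (hj : 1 ≤ j) (hjN : j ≤ N) :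
    JacquardSplit (v' ++ rng j) (List.replicate N 0) := by
  refine ⟨[], v', List.replicate (N-j) 0, j, hj, Or.inl ⟨0, by omega,
    List.replicate j 0, by simp, by simp, by simp [krBlock_zero], ?_⟩⟩
  rw [show N = (N-j) + j by omega, List.replicate_add]
  simp

lemma split_two_rng {v v' : List ℕ} {j j' : ℕ} (hj : 1 ≤ j) (hlt : j < j') :
    JacquardSplit (v ++ rng j) (v' ++ rng j') := by
  refine ⟨[], v, v' ++ rng (j'-j), j, hj, Or.inl ⟨0, by omega,
    (List.range j).map (fun x => (j'-j) + x + 1), by simp, ?_,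
    by simp [krBlock_zero], ?_⟩⟩
  · intro x hx
    obtain ⟨a, _, rfl⟩ := List.mem_map.1 hx
    omega
  · have hr := rng_add (j'-j) j
    rw [show j'-j+j = j' by omega] at hr
    rw [hr]; simp

lemma split_main {u v' : List ℕ} {m k j : ℕ} (hm : 1 ≤ m) (hk : 1 ≤ k) (hj : 1 ≤ j) :
    JacquardSplit (u ++ rng m ++ List.replicate k 0) (v' ++ rng j) ∨
    JacquardSplit (v' ++ rng j) (u ++ rng m ++ List.replicate k 0) := by
  rcases lt_trichotomy j (m+k) with hlt | heq | hgt
  · right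
    by_cases hjk : j ≤ k
    · refine ⟨[], v', u ++ rng m ++ List.replicate (k-j) 0, j, hj, Or.inl ⟨0, by omega,
        List.replicate j 0, by simp, by simp, by simp [krBlock_zero], ?_⟩⟩
      rw [show k = (k-j) + j by omega, List.replicate_add]
      simp
    · have htm : j - k < m := by omega
      refine ⟨[], v', u ++ rng (m - (j-k)), j, hj, Or.inl ⟨0, by omega,
        (List.range (j-k)).map (fun x => (m - (j-k)) + x + 1) ++ List.replicate k 0,
        by simp; omega, ?_, by simp [krBlock_zero], ?_⟩⟩
      · intro x hx
        rcases List.mem_append.1 hx with h | h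
        · obtain ⟨a, _, rfl⟩ := List.mem_map.1 h
          omega
        · rw [List.eq_of_mem_replicate h]; omega
      · have hr := rng_add (m - (j-k)) (j-k)
        rw [show m-(j-k)+(j-k) = m by omega] at hr
        rw [hr]; simp
  · left
    refine ⟨[], u, v', j, hj, Or.inr ⟨k, 0, by omega, by omega, by omega, ?_,
      by simp [krBlock_zero]⟩⟩
    rw [krBlock_eq, show j - k = m by omega]
    simp
  · left
    refine ⟨[], u, v' ++ rng (j - (m+k)), m+k, by omega, Or.inl ⟨k, by omega,
      (List.range (m+k)).map (fun x => (j-(m+k)) + x + 1), by simp, ?_, ?_, ?_⟩⟩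
    · intro x hx
      obtain ⟨a, _, rfl⟩ := List.mem_map.1 hx
      omega
    · rw [krBlock_eq, show m+k-k = m by omega]
      simp
    · have hr := rng_add (j-(m+k)) (m+k)
      rw [show j-(m+k)+(m+k) = j by omega] at hr
      rw [hr]; simp

lemma jacquard_main_s8 : ∀ n, 1 ≤ n → ∀ w w', w ∈ Jacquard n → w' ∈ Jacquard n → w ≠ w' →
    JacquardSplit w w' ∨ JacquardSplit w' w := by
  intro n
  induction n using Nat.strong_induction_on with
  | _ n ih =>
    rcases n with _ | _ | N
    · omega
    · intro _ w w' hw hw' hne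
      exact absurd ((jac_one hw).trans (jac_one hw').symm) hne
    · intro _ w w' hw hw' hne
      rw [mem_jacquard_iff] at hw hw'
      rcases hw with ⟨v, hv, rfl⟩ | ⟨j, hj1, hjN, v, hv, rfl⟩ <;>
        rcases hw' with ⟨v2, hv2, rfl⟩ | ⟨j2, hj21, hj2N, v2, hv2, rfl⟩
      · have hvne : v ≠ v2 := fun h => hne (by rw [h])
        rcases ih (N+1) (by omega) (by omega) v v2 hv hv2 hvne with h | h
        · exact Or.inl (h.append_right [0])
        · exact Or.inr (h.append_right [0])
      · rcases decomp (N+1) (by omega) v hv with h | ⟨u, m, k, hm, h⟩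
        · subst h
          rw [rep_append (N+1)]
          exact Or.inr (split_of_zero hj21 (by omega))
        · subst h
          rw [show (u ++ rng m ++ List.replicate k 0) ++ [0]
              = u ++ rng m ++ List.replicate (k+1) 0 by simp [List.replicate_succ']]
          exact split_main hm (by omega) hj21
      · rcases decomp (N+1) (by omega) v2 hv2 with h | ⟨u, m, k, hm, h⟩
        · subst h
          rw [rep_append (N+1)]
          exact Or.inl (split_of_zero hj1 (by omega))
        · subst h
          rw [show (u ++ rng m ++ List.replicate k 0) ++ [0]
              = u ++ rng m ++ List.replicate (k+1) 0 by simp [List.replicate_succ']]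
          exact (split_main hm (by omega) hj1).symm
      · rcases lt_trichotomy j j2 with h | h | h
        · exact Or.inl (split_two_rng hj1 h)
        · subst h
          have hvne : v ≠ v2 := fun h => hne (by rw [h])
          rcases ih (N+2-j) (by omega) (by omega) v v2 hv hv2 hvne with h | h
          · exact Or.inl (h.append_right (rng j))
          · exact Or.inr (h.append_right (rng j))
        · exact Or.inr (split_two_rng hj21 h)

/-- Structural decomposition of distinct Jacquard words (used in the proofs of
Theorems 5.4 and 6.6 of the paper): if `w ≠ w̃` both belong to `J_n`, `n ≥ 1`, then
after possibly exchanging `w` and `w̃` they split as in `JacquardSplit`. -/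
theorem jacquard_distinct_split (n : ℕ) (hn : 1 ≤ n) (w w' : List ℕ)
    (hw : w ∈ Jacquard n) (hw' : w' ∈ Jacquard n) (hne : w ≠ w') :
    JacquardSplit w w' ∨ JacquardSplit w' w :=
  jacquard_main_s8 n hn w w' hw hw' hne
end

section
/- Let j ≥ 1 and let δ_0, δ_1, ..., δ_{j−1} be real numbers such that for every 1 ≤ k ≤ j−1 there exists an integer m with δ_k = arctan(sin δ_{k−1}) + mπ. Then for every 1 ≤ k ≤ j one has sin(δ_{k−1}) · ∏_{m=k}^{j−1} cos(δ_m) = sin(δ_{j−1}) (the product being empty, hence 1, when k = j). -/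
open Real

lemma trailer_step (s x : ℝ) (m : ℤ) (hx : x = Real.arctan s + m * Real.pi) :
    s * Real.cos x = Real.sin x := by
  have hcos : Real.cos x ≠ 0 := by
    rw [hx, Real.cos_add_int_mul_pi]
    have := Real.cos_arctan_pos s
    positivity
  have htan : Real.tan x = s := by
    rw [hx, Real.tan_add_int_mul_pi, Real.tan_arctan]
  rw [← htan, Real.tan_eq_sin_div_cos, div_mul_cancel₀ _ hcos]

/-- Chained trigonometric identity underlying Lemma 4.10 (lem-label-sum) for the
`n`-trailer system: if `δ₀, δ₁, …, δ_{j-1}` are real numbers such that for every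
`1 ≤ k ≤ j-1` one has `δ_k = arctan (sin δ_{k-1}) + mπ` for some integer `m`, then
for every `1 ≤ k ≤ j`, `sin (δ_{k-1}) · ∏_{m=k}^{j-1} cos (δ_m) = sin (δ_{j-1})`
(the product being empty, hence `1`, when `k = j`). -/
theorem trailer_sin_cos_telescope (j : ℕ) (hj : 1 ≤ j) (δ : ℕ → ℝ)
    (h : ∀ k, 1 ≤ k → k ≤ j - 1 →
      ∃ m : ℤ, δ k = Real.arctan (Real.sin (δ (k - 1))) + m * Real.pi) :
    ∀ k, 1 ≤ k → k ≤ j →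
      Real.sin (δ (k - 1)) * ∏ m ∈ Finset.Ico k j, Real.cos (δ m) =
        Real.sin (δ (j - 1)) := by
  intro k hk1 hkj
  obtain ⟨d, hd⟩ : ∃ d, j = k + d := ⟨j - k, (Nat.add_sub_cancel' hkj).symm⟩
  clear hkj hj
  subst hd
  induction d generalizing k with
  | zero => simp
  | succ n ih =>
    have hkj : k ≤ k + (n + 1) - 1 := by omega
    obtain ⟨m, hm⟩ := h k hk1 hkj
    have hstep := trailer_step (Real.sin (δ (k - 1))) (δ k) m hm
    rw [Finset.prod_eq_prod_Ico_succ_bot (by omega) (fun m => Real.cos (δ m)),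
      ← mul_assoc, hstep]
    have := ih (k + 1) (by omega) (by intro l hl1 hl2; exact h l hl1 (by omega))
    have e1 : k + 1 + n = k + (n + 1) := by omega
    have e2 : k + 1 + n - 1 = k + (n + 1) - 1 := by omega
    rw [e1] at this
    simpa using this
end
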